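/- arXiv:2210.05972 — 2 statements merged into one kernel-verified Lean document; each statement's English description precedes it below -/
import Mathlib

section
/- Suppose M(g,x)Φ(g^k∘x) = Φ(g^{k+1}∘x) for all k ∈ ℕ, g, x, with Φ(x) of full row rank. Then M(g^ℓ, x) = M(g,x)^ℓ holds for all integers ℓ, where negative matrix powers are defined via the inverse (zpow). -/
theorem stmt_6 {G X : Type*} [Group G] [MulAction G X] {a m : ℕ}
    (Φ : X → Matrix (Fin a) (Fin m) ℝ)
    (hrank : ∀ x (B C : Matrix (Fin a) (Fin a) ℝ), B * Φ x = C * Φ x → B = C)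
    (M : G → X → Matrix (Fin a) (Fin a) ℝ)
    (hM : ∀ (k : ℕ) (g : G) (x : X), M g x * Φ (g ^ k • x) = Φ (g ^ (k + 1) • x)) :
    ∀ (ℓ : ℤ) (g : G) (x : X), M (g ^ ℓ) x = (M g x) ^ ℓ := by
  -- powers act on Φ
  have key0 : ∀ (g : G) (x : X) (n : ℕ), (M g x) ^ n * Φ x = Φ (g ^ n • x) := by
    intro g x n
    induction n with
    | zero => simp
    | succ n ih =>
      rw [pow_succ', Matrix.mul_assoc, ih, hM n g x]
  -- natural power case
  have natkey : ∀ (g : G) (x : X) (n : ℕ), M (g ^ n) x = (M g x) ^ n := by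
    intro g x n
    apply hrank x
    rw [key0]
    have := hM 0 (g ^ n) x
    simpa using this
  -- M g x * Φ (g⁻¹ • x) = Φ x
  have hshift : ∀ (g : G) (x : X), M g x * Φ (g⁻¹ • x) = Φ x := by
    intro g x
    have hC : M g (g⁻¹ • x) = M g x := by
      apply hrank x
      have h2 := hM 1 g (g⁻¹ • x)
      have h0 := hM 0 g x
      simp only [pow_succ, pow_zero, pow_one, one_mul, one_smul, smul_smul,
        mul_assoc, mul_inv_cancel, mul_one] at h2 h0
      rw [h2, h0]
    have h1 := hM 0 g (g⁻¹ • x)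
    simp only [pow_zero, one_smul, pow_one, smul_smul, mul_inv_cancel] at h1
    rw [hC] at h1
    simpa using h1
  -- two-sided inverse
  have hAB : ∀ (g : G) (x : X), M g x * M g⁻¹ x = 1 := by
    intro g x
    apply hrank x
    rw [Matrix.mul_assoc, Matrix.one_mul]
    have h0 := hM 0 g⁻¹ x
    simp only [pow_zero, one_smul, zero_add, pow_one] at h0
    rw [h0, hshift]
  have hBA : ∀ (g : G) (x : X), M g⁻¹ x * M g x = 1 := by
    intro g x
    have := hAB g⁻¹ x
    simpa using this
  have hpowinv : ∀ (g : G) (x : X) (n : ℕ),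
      (M g⁻¹ x) ^ n * (M g x) ^ n = 1 := by
    intro g x n
    induction n with
    | zero => simp
    | succ n ih =>
      rw [pow_succ, pow_succ', mul_assoc, ← mul_assoc (M g⁻¹ x),
        hBA, one_mul, ih]
  intro ℓ g x
  cases ℓ with
  | ofNat n =>
    simpa using natkey g x n
  | negSucc n =>
    rw [zpow_negSucc, zpow_negSucc, ← inv_pow, natkey]
    exact (Matrix.inv_eq_left_inv (hpowinv g x (n + 1))).symm
end

section
/- Let G be a commutative group acting on X, and suppose M satisfies M(g,x)Φ(g^k∘x) = Φ(g^{k+1}∘x) for all k ∈ ℕ with Φ of full row rank. If g, h ∈ G and n ≥ 1 satisfy (g·r)^n · g^{-n} = h for some r ∈ G, then M(g·r, g^{-n}∘x) = M(g·r, h∘x) for all x. -/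
theorem stmt_8 {G X : Type*} [CommGroup G] [MulAction G X] {a m : ℕ}
    (Φ : X → Matrix (Fin a) (Fin m) ℝ)
    (hrank : ∀ x (B C : Matrix (Fin a) (Fin a) ℝ), B * Φ x = C * Φ x → B = C)
    (M : G → X → Matrix (Fin a) (Fin a) ℝ)
    (hM : ∀ (k : ℕ) (g : G) (x : X), M g x * Φ (g ^ k • x) = Φ (g ^ (k + 1) • x)) :
    ∀ (g r h : G) (n : ℕ), 1 ≤ n → (g * r) ^ n * (g ^ n)⁻¹ = h →
      ∀ x : X, M (g * r) ((g ^ n)⁻¹ • x) = M (g * r) (h • x) := by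
  intro g r h n hn hh x
  have key : ∀ (s : G) (k : ℕ) (y : X), M s (s ^ k • y) = M s y := by
    intro s k y
    apply hrank (s ^ k • y)
    have h1 := hM 0 s (s ^ k • y)
    have h2 := hM k s y
    simp only [pow_zero, one_smul] at h1
    rw [h1, h2, smul_smul, ← pow_add]; ring_nf
  have : h • x = (g * r) ^ n • ((g ^ n)⁻¹ • x) := by
    rw [smul_smul, hh]
  rw [this, key]
end
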